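/- (Uniform recurrence under an energy bound.) Let E : ℕ → ℝ be a nondecreasing sequence with Eₙ ≥ 0 for all n and Eₙ → +∞, and for t ∈ ℝ let U_t denote the time-evolution map on ℓ²(ℕ, ℂ) given by (U_t c)ₙ = exp(-i·Eₙ·t)·cₙ. Let M > 0 and let X ⊆ ℓ²(ℕ, ℂ) be any set of states such that every c ∈ X has ‖c‖ = 1 and energy expectation ∑ₙ |cₙ|²·Eₙ < M. Then for every δ > 0 and every τ > 0 there exists a single time T > τ such that ‖c - U_T c‖ < δ for all c ∈ X simultaneously. -/

import Mathlib

/-!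
Split a state into low and high modes at an index `N` beyond which `Eₙ` exceeds a level `A`.
By Markov's inequality the high modes carry weight at most `M / A`, uniformly on `X`, so they
contribute little to `‖c - U_T c‖` whatever `T` is. The finitely many low-mode phases
`exp(-i Eₙ T)`, `n < N`, at times `T = m h` form an orbit of a rotation of the compact torus,
which by compactness returns arbitrarily close to the identity for some `m ≥ 1`; at such a
time the low modes contribute little as well, for every state at once.
-/

open scoped ENNReal

/-- The time-evolution map `U_t` on `ℓ²(ℕ, ℂ)`: `(U_t c)ₙ = exp(-i·Eₙ·t)·cₙ`. -/
noncomputable def timeEvol (E : ℕ → ℝ) (t : ℝ) (c : lp (fun _ : ℕ => ℂ) 2) :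
    lp (fun _ : ℕ => ℂ) 2 :=
  ⟨fun n => Complex.exp ((-(E n * t) : ℝ) * Complex.I) * (c : ∀ _ : ℕ, ℂ) n, by
    apply memℓp_gen
    have hs : Summable fun n : ℕ => ‖(c : ∀ _ : ℕ, ℂ) n‖ ^ (2 : ℝ≥0∞).toReal :=
      (lp.memℓp c).summable (by norm_num)
    refine hs.congr fun n => ?_
    simp [norm_mul, Complex.norm_exp]⟩

open Complex Filter Finset

instance : IsIsometricSMul Circle Circle :=
  ⟨fun a => Isometry.of_dist_eq fun b c => by
    change dist ((a * b : Circle) : ℂ) ((a * c : Circle) : ℂ) = dist (b : ℂ) c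
    rw [Circle.coe_mul, Circle.coe_mul, dist_eq_norm, dist_eq_norm, ← mul_sub, norm_mul,
      Circle.norm_coe, one_mul]⟩

theorem exists_pow_dist_one_lt {G : Type*} [Monoid G] [PseudoMetricSpace G] [CompactSpace G]
    [IsIsometricSMul G G] (g : G) {ε : ℝ} (hε : 0 < ε) :
    ∃ m : ℕ, 0 < m ∧ dist (g ^ m) 1 < ε := by
  obtain ⟨_, φ, hφ, hlim⟩ := CompactSpace.tendsto_subseq fun n => g ^ n
  obtain ⟨K, hK⟩ := Metric.cauchySeq_iff'.1 hlim.cauchySeq ε hε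
  have hlt : φ K < φ (K + 1) := hφ K.lt_succ_self
  refine ⟨φ (K + 1) - φ K, Nat.sub_pos_of_lt hlt, ?_⟩
  calc dist (g ^ (φ (K + 1) - φ K)) 1
      = dist (g ^ φ K * g ^ (φ (K + 1) - φ K)) (g ^ φ K * 1) := (dist_mul_left _ _ _).symm
    _ = dist (g ^ φ (K + 1)) (g ^ φ K) := by rw [← pow_add, Nat.add_sub_cancel' hlt.le, mul_one]
    _ < ε := hK (K + 1) K.le_succ

theorem exists_gt_forall_norm_exp_mul_I_sub_one_lt {ι : Type*} [Finite ι] (ω : ι → ℝ) (τ : ℝ)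
    {ε : ℝ} (hε : 0 < ε) : ∃ T > τ, ∀ i, ‖exp ((ω i * T : ℝ) * I) - 1‖ < ε := by
  have := Fintype.ofFinite ι
  set h := |τ| + 1
  obtain ⟨m, hm, hdist⟩ := exists_pow_dist_one_lt (fun i => Circle.exp (ω i * h)) hε
  refine ⟨m * h, ?_, fun i => ?_⟩
  · have : h ≤ m * h := le_mul_of_one_le_left (by positivity) (by exact_mod_cast hm)
    linarith [le_abs_self τ]
  · have hi : dist (Circle.exp (ω i * h) ^ m) 1 < ε := (dist_le_pi_dist _ _ i).trans_lt hdist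
    rw [← Circle.exp_nsmul, nsmul_eq_mul] at hi
    change dist ((Circle.exp _ : Circle) : ℂ) ((1 : Circle) : ℂ) < ε at hi
    rw [Circle.coe_exp, Circle.coe_one, dist_eq_norm] at hi
    rwa [show ω i * (m * h) = m * (ω i * h) by ring]

theorem lp.norm_sq_eq_tsum {ι : Type*} {F : ι → Type*} [∀ i, NormedAddCommGroup (F i)]
    (f : lp F 2) : ‖f‖ ^ 2 = ∑' i, ‖f i‖ ^ 2 := by
  simpa [Real.rpow_natCast] using lp.norm_rpow_eq_tsum (p := 2) (by norm_num) f

theorem lp.summable_norm_sq {ι : Type*} {F : ι → Type*} [∀ i, NormedAddCommGroup (F i)]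
    (f : lp F 2) : Summable fun i => ‖f i‖ ^ 2 := by
  simpa [Real.rpow_natCast] using (lp.memℓp f).summable (p := 2) (by norm_num)

section TailSplitting

variable {a : ℕ → ℝ} {N : ℕ}

theorem tsum_mul_le_mul_tsum_add_mul_tsum_nat_add {w : ℕ → ℝ} {η B : ℝ} (ha : ∀ n, 0 ≤ a n)
    (ha' : Summable a) (hw : ∀ n, 0 ≤ w n) (hwB : ∀ n, w n ≤ B) (hwη : ∀ n < N, w n ≤ η)
    (hη : 0 ≤ η) : ∑' n, w n * a n ≤ η * ∑' n, a n + B * ∑' n, a (n + N) := by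
  have hwa : Summable fun n => w n * a n :=
    .of_nonneg_of_le (fun n => mul_nonneg (hw n) (ha n))
      (fun n => mul_le_mul_of_nonneg_right (hwB n) (ha n)) (ha'.mul_left B)
  have hhead : ∑ n ∈ range N, w n * a n ≤ η * ∑' n, a n :=
    calc ∑ n ∈ range N, w n * a n ≤ ∑ n ∈ range N, η * a n :=
          sum_le_sum fun n hn => mul_le_mul_of_nonneg_right (hwη n (mem_range.1 hn)) (ha n)
      _ ≤ η * ∑' n, a n := by
          rw [← mul_sum]
          exact mul_le_mul_of_nonneg_left (ha'.sum_le_tsum _ fun n _ => ha n) hη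
  have htail : ∑' n, w (n + N) * a (n + N) ≤ B * ∑' n, a (n + N) := by
    rw [← tsum_mul_left]
    exact ((summable_nat_add_iff N).2 hwa).tsum_le_tsum
      (fun n => mul_le_mul_of_nonneg_right (hwB _) (ha _))
      (((summable_nat_add_iff N).2 ha').mul_left B)
  rw [← hwa.sum_add_tsum_nat_add N]
  exact add_le_add hhead htail

theorem mul_tsum_nat_add_le_tsum_mul {E : ℕ → ℝ} {A : ℝ} (ha : ∀ n, 0 ≤ a n) (hE : ∀ n, 0 ≤ E n)
    (ha' : Summable a) (haE : Summable fun n => a n * E n) (hA : ∀ n ≥ N, A ≤ E n) :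
    A * ∑' n, a (n + N) ≤ ∑' n, a n * E n := by
  rw [← tsum_mul_left, ← haE.sum_add_tsum_nat_add N]
  refine le_add_of_nonneg_of_le (sum_nonneg fun n _ => mul_nonneg (ha n) (hE n)) ?_
  exact ((summable_nat_add_iff N).2 ha').mul_left A |>.tsum_le_tsum
    (fun n => by rw [mul_comm]; exact mul_le_mul_of_nonneg_left (hA _ (N.le_add_left n)) (ha _))
    ((summable_nat_add_iff N).2 haE)

end TailSplitting

theorem timeEvol_apply (E : ℕ → ℝ) (t : ℝ) (c : lp (fun _ : ℕ => ℂ) 2) (n : ℕ) :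
    timeEvol E t c n = exp ((-(E n * t) : ℝ) * I) * c n :=
  rfl

theorem norm_sub_timeEvol_sq_le (E : ℕ → ℝ) (t : ℝ) (c : lp (fun _ : ℕ => ℂ) 2) {N : ℕ} {ε : ℝ}
    (hphase : ∀ n < N, ‖exp ((-(E n * t) : ℝ) * I) - 1‖ ≤ ε) :
    ‖c - timeEvol E t c‖ ^ 2 ≤ ε ^ 2 * ‖c‖ ^ 2 + 4 * ∑' n, ‖c (n + N)‖ ^ 2 := by
  have hcoord : ∀ n, ‖(c - timeEvol E t c) n‖ ^ 2
      = ‖exp ((-(E n * t) : ℝ) * I) - 1‖ ^ 2 * ‖c n‖ ^ 2 := fun n => by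
    rw [lp.coeFn_sub, Pi.sub_apply, timeEvol_apply, ← one_sub_mul, norm_mul, mul_pow, norm_sub_rev]
  have htwo : ∀ n, ‖exp ((-(E n * t) : ℝ) * I) - 1‖ ≤ 2 := fun n =>
    (norm_sub_le _ _).trans (by rw [norm_exp_ofReal_mul_I, norm_one]; norm_num)
  rw [lp.norm_sq_eq_tsum, lp.norm_sq_eq_tsum, tsum_congr hcoord]
  refine tsum_mul_le_mul_tsum_add_mul_tsum_nat_add (fun n => by positivity)
    (lp.summable_norm_sq c) (fun n => by positivity) (fun n => ?_)
    (fun n hn => pow_le_pow_left₀ (norm_nonneg _) (hphase n hn) 2) (by positivity)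
  exact (pow_le_pow_left₀ (norm_nonneg _) (htwo n) 2).trans_eq (by norm_num)

theorem uniform_recurrence_energy_bound_general (E : ℕ → ℝ)
    (hpos : ∀ n, 0 ≤ E n) (hlim : Filter.Tendsto E Filter.atTop Filter.atTop)
    (M : ℝ) (X : Set (lp (fun _ : ℕ => ℂ) 2))
    (hXnorm : ∀ c ∈ X, ‖c‖ = 1)
    (hXsum : ∀ c ∈ X, Summable fun n : ℕ => ‖c n‖ ^ 2 * E n)
    (hXE : ∀ c ∈ X, ∑' n : ℕ, ‖c n‖ ^ 2 * E n < M)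
    (δ τ : ℝ) (hδ : 0 < δ) :
    ∃ T : ℝ, T > τ ∧ ∀ c ∈ X, ‖c - timeEvol E T c‖ < δ := by
  -- With this level the high modes contribute at most `4 M / A ≤ δ² / 2`, the low ones `(δ / 2)²`.
  obtain ⟨A, hA, hAM⟩ : ∃ A > 0, 8 * M ≤ A * δ ^ 2 :=
    ⟨max 1 (8 * M / δ ^ 2), by positivity,
      (div_le_iff₀ (by positivity)).1 (le_max_right _ _)⟩
  obtain ⟨N, hN⟩ := eventually_atTop.1 (hlim.eventually_ge_atTop A)
  obtain ⟨T, hτT, hT⟩ :=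
    exists_gt_forall_norm_exp_mul_I_sub_one_lt (fun n : Fin N => -E n) τ (half_pos hδ)
  refine ⟨T, hτT, fun c hc => ?_⟩
  have htail : A * ∑' n, ‖c (n + N)‖ ^ 2 < M :=
    (mul_tsum_nat_add_le_tsum_mul (fun n => by positivity) hpos (lp.summable_norm_sq c)
      (hXsum c hc) hN).trans_lt (hXE c hc)
  have hsq := norm_sub_timeEvol_sq_le E T c fun n hn => by
    simpa using (hT ⟨n, hn⟩).le
  rw [hXnorm c hc] at hsq
  have hsq_lt : ‖c - timeEvol E T c‖ ^ 2 < δ ^ 2 := by nlinarith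
  exact lt_of_pow_lt_pow_left₀ 2 hδ.le hsq_lt

/-- uniform recurrence under an energy bound. -/
theorem uniform_recurrence_energy_bound (E : ℕ → ℝ) (hmono : Monotone E)
    (hpos : ∀ n, 0 ≤ E n) (hlim : Filter.Tendsto E Filter.atTop Filter.atTop)
    (M : ℝ) (hM : 0 < M) (X : Set (lp (fun _ : ℕ => ℂ) 2))
    (hXnorm : ∀ c ∈ X, ‖c‖ = 1)
    (hXsum : ∀ c ∈ X, Summable fun n : ℕ => ‖c n‖ ^ 2 * E n)
    (hXE : ∀ c ∈ X, ∑' n : ℕ, ‖c n‖ ^ 2 * E n < M)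
    (δ τ : ℝ) (hδ : 0 < δ) (hτ : 0 < τ) :
    ∃ T : ℝ, T > τ ∧ ∀ c ∈ X, ‖c - timeEvol E T c‖ < δ :=
  uniform_recurrence_energy_bound_general E hpos hlim M X hXnorm hXsum hXE δ τ hδ
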